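/- A G-graded ring S is nearly epsilon-strongly graded if and only if S is symmetrically graded (S_g S_{g⁻¹} S_g = S_g for all g) and for each g ∈ G the ring S_g S_{g⁻¹} is s-unital. -/

import Mathlib

open Pointwise

section Defs

variable {G : Type} [AddGroup G] [DecidableEq G]
variable {A : Type} [Ring A]
variable {M : Type} [AddCommGroup M] [Module A M]

/-- The additive subgroup of `M` consisting of finite sums of products `a • m`
with `a ∈ S` and `m ∈ N`. -/
def prodSMul (S : AddSubgroup A) (N : AddSubgroup M) : AddSubgroup M where
  __ := S.toAddSubmonoid • N.toAddSubmonoid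
  neg_mem' {x} hx := by
    refine AddSubmonoid.smul_induction_on hx (fun a ha m hm => ?_) (fun x y hx hy => ?_)
    · rw [show -(a • m) = (-a) • m by rw [neg_smul]]
      exact AddSubmonoid.smul_mem_smul (S.neg_mem ha) hm
    · rw [neg_add]
      exact (S.toAddSubmonoid • N.toAddSubmonoid).add_mem hx hy

/-- A (possibly non-unital) ring, here an additive subgroup of `A` closed under
multiplication, is *s-unital* if every element has a left and a right local unit in it. -/
def IsSUnitalSub (I : AddSubgroup A) : Prop :=
  ∀ a ∈ I, ∃ u ∈ I, ∃ v ∈ I, u * a = a ∧ a * v = a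

variable (𝒜 : G → AddSubgroup A)

/-- `S` is symmetrically graded if `S_g S_{g⁻¹} S_g = S_g` for all `g`. -/
def IsSymmetricallyGraded : Prop := ∀ g : G, 𝒜 g * 𝒜 (-g) * 𝒜 g = 𝒜 g

/-- `S` is nearly epsilon-strongly graded if each `S_g` is an s-unital
`(S_g S_{g⁻¹}, S_{g⁻¹} S_g)`-bimodule: for every `s ∈ S_g` there are
`u ∈ S_g S_{g⁻¹}` and `v ∈ S_{g⁻¹} S_g` with `u s = s = s v`. -/
def IsNearlyEpsilonStrong : Prop :=
  ∀ g : G, ∀ s ∈ 𝒜 g, ∃ u ∈ 𝒜 g * 𝒜 (-g), ∃ v ∈ 𝒜 (-g) * 𝒜 g, u * s = s ∧ s * v = s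


/-!
If every element of a left module `M` over a non-unital ring `I` has a left unit in `I`, then
so does every finite family, with one common unit: if `u ∈ I` and `f ∈ I` is a left unit of
`m - u * m`, then `u + f - f * u` is a left unit of `m` and of everything `u` fixes. Every
element of `M * N` is a finite sum of products `m * n`, so it has a left unit in `I`.

Put `R_g = S_g S_{-g} ⊆ S_0`. If `S` is nearly epsilon-strongly graded, then `S_g = R_g S_g`,
and `R_g = S_g S_{-g}` inherits left units from `S_g` and right units from `S_{-g}`.
Conversely, symmetry gives `S_g = R_g S_g = S_g (S_{-g} S_g)`, and the s-unital rings `R_g`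
and `S_{-g} S_g` provide left and right units of the elements of `S_g`.
-/

namespace AddSubgroup

variable {R : Type*}

theorem mul_le [NonUnitalNonAssocRing R] {M N P : AddSubgroup R} :
    M * N ≤ P ↔ ∀ m ∈ M, ∀ n ∈ N, m * n ∈ P :=
  AddSubmonoid.mul_le (P := P.toAddSubmonoid)

theorem mul_le_mul_left [NonUnitalNonAssocRing R] {M N P : AddSubgroup R} (h : M ≤ N) :
    M * P ≤ N * P :=
  AddSubmonoid.mul_le_mul_left (P := P.toAddSubmonoid) h

protected theorem mul_assoc [NonUnitalRing R] (M N P : AddSubgroup R) :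
    M * N * P = M * (N * P) :=
  toAddSubmonoid_injective (mul_assoc M.toAddSubmonoid N.toAddSubmonoid P.toAddSubmonoid)

variable [NonUnitalRing R] {I M N : AddSubgroup R}

theorem exists_left_unit_extending (hI : I * I ≤ I) (hIM : I * M ≤ M)
    (hM : ∀ m ∈ M, ∃ e ∈ I, e * m = m) {u m : R} (hu : u ∈ I) (hm : m ∈ M) :
    ∃ e ∈ I, e * m = m ∧ ∀ x, u * x = x → e * x = x := by
  obtain ⟨f, hf, hfm⟩ := hM (m - u * m) (M.sub_mem hm (hIM (AddSubmonoid.mul_mem_mul hu hm)))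
  have hmul : ∀ x, (u + f - f * u) * x = u * x + f * (x - u * x) := fun x => by noncomm_ring
  refine ⟨u + f - f * u, I.sub_mem (I.add_mem hu hf) (hI (AddSubmonoid.mul_mem_mul hf hu)),
    ?_, fun x hx => ?_⟩
  · rw [hmul, hfm, add_sub_cancel]
  · rw [hmul, hx, sub_self, mul_zero, add_zero]

theorem exists_left_unit_of_mem_mul (hI : I * I ≤ I) (hIM : I * M ≤ M)
    (hM : ∀ m ∈ M, ∃ e ∈ I, e * m = m) {a : R} (ha : a ∈ M * N) :
    ∃ e ∈ I, e * a = a := by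
  suffices ∀ u ∈ I, ∃ e ∈ I, e * a = a ∧ ∀ x, u * x = x → e * x = x by
    obtain ⟨e, he, hea, -⟩ := this 0 I.zero_mem
    exact ⟨e, he, hea⟩
  refine AddSubmonoid.mul_induction_on ha (fun m hm n _ u hu => ?_) (fun x y hx hy u hu => ?_)
  · obtain ⟨e, he, hem, hext⟩ := exists_left_unit_extending hI hIM hM hu hm
    exact ⟨e, he, by rw [← mul_assoc, hem], hext⟩
  · obtain ⟨e₁, he₁, hex, hext₁⟩ := hx u hu
    obtain ⟨e₂, he₂, hey, hext₂⟩ := hy e₁ he₁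
    exact ⟨e₂, he₂, by rw [mul_add, hey, hext₂ x hex], fun z hz => hext₂ z (hext₁ z hz)⟩

theorem exists_right_unit_extending (hI : I * I ≤ I) (hNI : N * I ≤ N)
    (hN : ∀ n ∈ N, ∃ e ∈ I, n * e = n) {v n : R} (hv : v ∈ I) (hn : n ∈ N) :
    ∃ e ∈ I, n * e = n ∧ ∀ x, x * v = x → x * e = x := by
  obtain ⟨f, hf, hfn⟩ := hN (n - n * v) (N.sub_mem hn (hNI (AddSubmonoid.mul_mem_mul hn hv)))
  have hmul : ∀ x, x * (v + f - v * f) = x * v + (x - x * v) * f := fun x => by noncomm_ring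
  refine ⟨v + f - v * f, I.sub_mem (I.add_mem hv hf) (hI (AddSubmonoid.mul_mem_mul hv hf)),
    ?_, fun x hx => ?_⟩
  · rw [hmul, hfn, add_sub_cancel]
  · rw [hmul, hx, sub_self, zero_mul, add_zero]

theorem exists_right_unit_of_mem_mul (hI : I * I ≤ I) (hNI : N * I ≤ N)
    (hN : ∀ n ∈ N, ∃ e ∈ I, n * e = n) {a : R} (ha : a ∈ M * N) :
    ∃ e ∈ I, a * e = a := by
  suffices ∀ v ∈ I, ∃ e ∈ I, a * e = a ∧ ∀ x, x * v = x → x * e = x by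
    obtain ⟨e, he, hae, -⟩ := this 0 I.zero_mem
    exact ⟨e, he, hae⟩
  refine AddSubmonoid.mul_induction_on ha (fun m _ n hn v hv => ?_) (fun x y hx hy v hv => ?_)
  · obtain ⟨e, he, hne, hext⟩ := exists_right_unit_extending hI hNI hN hv hn
    exact ⟨e, he, by rw [mul_assoc, hne], hext⟩
  · obtain ⟨e₁, he₁, hxe, hext₁⟩ := hx v hv
    obtain ⟨e₂, he₂, hye, hext₂⟩ := hy e₁ he₁
    exact ⟨e₂, he₂, by rw [add_mul, hye, hext₂ x hxe], fun z hz => hext₂ z (hext₁ z hz)⟩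

end AddSubgroup

namespace SetLike

open AddSubgroup

variable {ι R : Type*} [AddGroup ι]

section NonUnitalNonAssocRing

variable [NonUnitalNonAssocRing R] (𝒜 : ι → AddSubgroup R) [GradedMul 𝒜]

theorem mul_le_graded (g h : ι) : 𝒜 g * 𝒜 h ≤ 𝒜 (g + h) :=
  mul_le.2 fun _ hm _ hn => mul_mem_graded hm hn

theorem mul_neg_mul_le (g h : ι) : 𝒜 g * 𝒜 (-g) * 𝒜 h ≤ 𝒜 h :=
  mul_le.2 fun _ hx _ hm => by
    simpa using mul_mem_graded (mul_le_graded 𝒜 g (-g) hx) hm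

theorem mul_mul_neg_le (g h : ι) : 𝒜 h * (𝒜 g * 𝒜 (-g)) ≤ 𝒜 h :=
  mul_le.2 fun _ hm _ hx => by
    simpa using mul_mem_graded hm (mul_le_graded 𝒜 g (-g) hx)

end NonUnitalNonAssocRing

theorem mul_neg_mul_mul_neg_le [NonUnitalRing R] (𝒜 : ι → AddSubgroup R) [GradedMul 𝒜] (g : ι) :
    𝒜 g * 𝒜 (-g) * (𝒜 g * 𝒜 (-g)) ≤ 𝒜 g * 𝒜 (-g) := by
  rw [← AddSubgroup.mul_assoc]
  exact mul_le_mul_left (mul_neg_mul_le 𝒜 g g)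

end SetLike

theorem IsSUnitalSub.exists_left_unit {I : AddSubgroup A} (hI : IsSUnitalSub I) {a : A}
    (ha : a ∈ I) : ∃ u ∈ I, u * a = a :=
  let ⟨u, hu, _, _, hua, _⟩ := hI a ha
  ⟨u, hu, hua⟩

theorem IsSUnitalSub.exists_right_unit {I : AddSubgroup A} (hI : IsSUnitalSub I) {a : A}
    (ha : a ∈ I) : ∃ v ∈ I, a * v = a :=
  let ⟨_, _, v, hv, _, hav⟩ := hI a ha
  ⟨v, hv, hav⟩

open SetLike AddSubgroup in
theorem isNearlyEpsilonStrong_iff_symmetricallyGraded_and_sUnital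
    {G : Type} [AddGroup G] [DecidableEq G]
    {A : Type} [Ring A] (𝒜 : G → AddSubgroup A) [GradedRing 𝒜] :
    IsNearlyEpsilonStrong 𝒜 ↔
      IsSymmetricallyGraded 𝒜 ∧ ∀ g : G, IsSUnitalSub (𝒜 g * 𝒜 (-g)) := by
  constructor
  · intro h
    refine ⟨fun g => le_antisymm (mul_neg_mul_le 𝒜 g g) fun s hs => ?_, fun g a ha => ?_⟩
    · obtain ⟨u, hu, -, -, hus, -⟩ := h g s hs
      exact hus ▸ AddSubmonoid.mul_mem_mul hu hs
    · have hleft : ∀ s ∈ 𝒜 g, ∃ u ∈ 𝒜 g * 𝒜 (-g), u * s = s := fun s hs =>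
        let ⟨u, hu, _, _, hus, _⟩ := h g s hs; ⟨u, hu, hus⟩
      have hright : ∀ t ∈ 𝒜 (-g), ∃ v ∈ 𝒜 g * 𝒜 (-g), t * v = t := fun t ht => by
        obtain ⟨-, -, v, hv, -, htv⟩ := h (-g) t ht
        exact ⟨v, by simpa using hv, htv⟩
      obtain ⟨u, hu, hua⟩ := exists_left_unit_of_mem_mul (mul_neg_mul_mul_neg_le 𝒜 g)
        (mul_neg_mul_le 𝒜 g g) hleft ha
      obtain ⟨v, hv, hav⟩ := exists_right_unit_of_mem_mul (mul_neg_mul_mul_neg_le 𝒜 g)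
        (mul_mul_neg_le 𝒜 g (-g)) hright ha
      exact ⟨u, hu, v, hv, hua, hav⟩
  · rintro ⟨hsym, hunital⟩ g s hs
    rw [← hsym g] at hs
    obtain ⟨u, hu, hus⟩ := exists_left_unit_of_mem_mul (mul_neg_mul_mul_neg_le 𝒜 g)
      (mul_neg_mul_mul_neg_le 𝒜 g) (fun _ => (hunital g).exists_left_unit) hs
    have hunital' : IsSUnitalSub (𝒜 (-g) * 𝒜 g) := by simpa using hunital (-g)
    have hmul' : 𝒜 (-g) * 𝒜 g * (𝒜 (-g) * 𝒜 g) ≤ 𝒜 (-g) * 𝒜 g := by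
      simpa using mul_neg_mul_mul_neg_le 𝒜 (-g)
    rw [AddSubgroup.mul_assoc] at hs
    obtain ⟨v, hv, hsv⟩ := exists_right_unit_of_mem_mul hmul' hmul'
      (fun _ => hunital'.exists_right_unit) hs
    exact ⟨u, hu, v, hv, hus, hsv⟩
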